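/- For every k ≥ 2 the operations Δ_2, Δ_3, … on M (the mod-2 chains/homology of a closed compact unorientable surface of genus g, with zero differential) satisfy the A∞-coalgebra relation in arity k, i.e. Σ_{i=1}^{k−2} Σ_{j=0}^{k−i−1} (1^{⊗j} ⊗ Δ_{i+1} ⊗ 1^{⊗(k−i−j−1)}) ∘ Δ_{k−i} = 0 on M; thus (M, 0, Δ_2, Δ_3, …) is an A∞-coalgebra over ℤ/2ℤ. -/
import Mathlib


noncomputable section

/-- Generators of the mod-2 chains/homology of the connected sum of `g` real projective
planes: the vertex `v` (degree 0), edges `e i` modelling `e_{i+1}` (degree 1, 0-based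
indices), and the 2-dimensional class `X` (degree 2). -/
inductive UCell (g : ℕ) : Type where
  | v : UCell g
  | e : Fin g → UCell g
  | X : UCell g
deriving DecidableEq

/-- `TU g k` models `M^{⊗k}`: the free `ℤ/2ℤ`-module on `k`-tuples of generators. -/
abbrev TU (g k : ℕ) : Type := (Fin k → UCell g) →₀ ZMod 2

/-- The `A_∞`-coalgebra operations on the generators: `Δ₂(v) = v ⊗ v`,
`Δ₂(e_i) = v ⊗ e_i + e_i ⊗ v`, `Δ₂(X) = v ⊗ X + X ⊗ v + Σ_{i=1}^{g} e_i ⊗ e_i`; for `k ≥ 3`,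
`Δ_k` vanishes on `v` and on each `e_i` and, with `i_p = 2⌊(p+1)/2⌋ − 1` and
`j_q = 2⌊(q+1)/2⌋`,
`Δ_k(X) = Σ_{1≤p₁<⋯<p_k≤2⌈g/2⌉} e_{i_{p₁}} ⊗ ⋯ ⊗ e_{i_{p_k}}
        + Σ_{1≤q₁<⋯<q_k≤2⌊g/2⌋} e_{j_{q₁}} ⊗ ⋯ ⊗ e_{j_{q_k}}`
(below the `p`'s and `q`'s are 0-based, which shifts the sequence formulas by one, and the
resulting 1-based edge indices are converted to 0-based ones). -/
def DeltaUB (g : ℕ) (k : ℕ) : UCell g → TU g k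
  | .v => if k = 2 then Finsupp.single (fun _ => UCell.v) 1 else 0
  | .e i =>
      if k = 2 then
        Finsupp.single (fun p : Fin k => if (p : ℕ) = 0 then UCell.v else UCell.e i) 1 +
          Finsupp.single (fun p : Fin k => if (p : ℕ) = 0 then UCell.e i else UCell.v) 1
      else 0
  | .X =>
      if k = 2 then
        Finsupp.single (fun p : Fin k => if (p : ℕ) = 0 then UCell.v else UCell.X) 1 +
          Finsupp.single (fun p : Fin k => if (p : ℕ) = 0 then UCell.X else UCell.v) 1 +
          ∑ i : Fin g, Finsupp.single (fun _ : Fin k => UCell.e i) 1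
      else
        (∑ f : Fin k → Fin (2 * ((g + 1) / 2)),
          if ∀ a b : Fin k, a < b → f a < f b then
            Finsupp.single (fun q : Fin k =>
              UCell.e ⟨2 * (((f q : ℕ) + 2) / 2) - 2, by have := (f q).isLt; omega⟩) 1
          else 0) +
        (∑ f : Fin k → Fin (2 * (g / 2)),
          if ∀ a b : Fin k, a < b → f a < f b then
            Finsupp.single (fun q : Fin k =>
              UCell.e ⟨2 * (((f q : ℕ) + 2) / 2) - 1, by have := (f q).isLt; omega⟩) 1
          else 0)

/-- Splicing a `j`-tuple into a `k`-tuple at position `a`, producing an `m`-tuple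
(meaningful when `m = k + j - 1` and `a < k`). -/
def spliceU {g k j : ℕ} (m a : ℕ) (x : Fin k → UCell g) (y : Fin j → UCell g) :
    Fin m → UCell g := fun q =>
  if h1 : (q : ℕ) < a ∧ (q : ℕ) < k then x ⟨q, h1.2⟩
  else if h2 : a ≤ (q : ℕ) ∧ (q : ℕ) - a < j then y ⟨(q : ℕ) - a, h2.2⟩
  else if h3 : (q : ℕ) + 1 - j < k then x ⟨(q : ℕ) + 1 - j, h3⟩
  else UCell.v

/-- `oppU g k m j a D` is the linear map `1^{⊗a} ⊗ D ⊗ 1^{⊗(k-1-a)} : M^{⊗k} → M^{⊗m}`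
(meaningful when `m = k + j - 1`), where `D` is the basis-level description of an operation
`M → M^{⊗j}`; over `ℤ/2ℤ` Koszul signs are irrelevant. -/
def oppU (g k m j a : ℕ) (D : UCell g → TU g j) : TU g k →ₗ[ZMod 2] TU g m :=
  Finsupp.linearCombination (ZMod 2) fun x : Fin k → UCell g =>
    if ha : a < k then Finsupp.mapDomain (spliceU m a x) (D (x ⟨a, ha⟩)) else 0

/-- `Δ_k` as a linear map `M → M^{⊗k}`. -/
def DmapU (g k : ℕ) : TU g 1 →ₗ[ZMod 2] TU g k :=
  Finsupp.linearCombination (ZMod 2) fun x : Fin 1 → UCell g => DeltaUB g k (x 0)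

end


section AUX

variable {g : ℕ}

lemma m2_add_self {M : Type*} [AddCommMonoid M] [Module (ZMod 2) M] (x : M) : x + x = 0 := by
  have h := two_smul (ZMod 2) x
  have h2 : (2 : ZMod 2) = 0 := rfl
  rw [h2, zero_smul] at h
  exact h.symm

lemma telescope2 {M : Type*} [AddCommMonoid M] [Module (ZMod 2) M]
    (a b : ℕ → M) : ∀ n : ℕ, 1 ≤ n → (∀ j, j + 1 < n → b j = a (j + 1)) →
    ∑ j ∈ Finset.range n, (a j + b j) = a 0 + b (n - 1) := by
  intro n
  induction n with
  | zero => omega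
  | succ n ih =>
    intro _ hab
    rcases Nat.eq_or_lt_of_le (Nat.one_le_iff_ne_zero.mpr (by omega : n + 1 ≠ 0)) with h1 | h1
    · simp [← h1]
    · have hn : 1 ≤ n := by omega
      rw [Finset.sum_range_succ, ih hn (fun j hj => hab j (by omega))]
      have hb : b (n - 1) = a n := by
        have := hab (n - 1) (by omega)
        rwa [show n - 1 + 1 = n from by omega] at this
      rw [hb, add_assoc, ← add_assoc (a n), m2_add_self, zero_add]
      simp

lemma oppU_single (g k m j a : ℕ) (D : UCell g → TU g j) (x : Fin k → UCell g) :
    oppU g k m j a D (Finsupp.single x 1) =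
      if ha : a < k then Finsupp.mapDomain (spliceU m a x) (D (x ⟨a, ha⟩)) else 0 := by
  simp [oppU, Finsupp.linearCombination_single]

lemma DmapU_single (g k : ℕ) (x : Fin 1 → UCell g) :
    DmapU g k (Finsupp.single x 1) = DeltaUB g k (x 0) := by
  simp [DmapU, Finsupp.linearCombination_single]

lemma DeltaUB_v_ne (g k : ℕ) (h : k ≠ 2) : DeltaUB g k UCell.v = 0 := by
  simp [DeltaUB, h]

lemma DeltaUB_e_ne (g k : ℕ) (i : Fin g) (h : k ≠ 2) : DeltaUB g k (UCell.e i) = 0 := by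
  simp [DeltaUB, h]

end AUX
section AUX2
variable {g : ℕ}

lemma spliceU_pair (m n a : ℕ) (hm : m = n + 1) (han : a < n)
    (x : Fin n → UCell g) (u w : UCell g) (q : Fin m) :
    spliceU m a x (fun p : Fin 2 => if (p : ℕ) = 0 then u else w) q =
      if h : (q : ℕ) < a then x ⟨q, by omega⟩
      else if (q : ℕ) = a then u
      else if (q : ℕ) = a + 1 then w
      else x ⟨(q : ℕ) - 1, by omega⟩ := by
  have hq := q.isLt
  simp only [spliceU]
  split_ifs <;> first | rfl | omega | (congr 1; exact Fin.ext (by simp; omega)) | simp_all | (exfalso; omega)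

lemma spliceU_left (m n : ℕ) (hm : m = n + 1) (hn : 1 ≤ n)
    (x2 : Fin 2 → UCell g) (y : Fin n → UCell g) (q : Fin m) :
    spliceU m 1 x2 y q = if h : (q : ℕ) = 0 then x2 0 else y ⟨(q : ℕ) - 1, by omega⟩ := by
  have hq := q.isLt
  simp only [spliceU]
  split_ifs <;> first | rfl | omega | (congr 1; exact Fin.ext (by simp; omega)) | simp_all | (exfalso; omega)

lemma spliceU_right (m n : ℕ) (hm : m = n + 1) (hn : 1 ≤ n)
    (x2 : Fin 2 → UCell g) (y : Fin n → UCell g) (q : Fin m) :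
    spliceU m 0 x2 y q = if h : (q : ℕ) < n then y ⟨q, h⟩ else x2 1 := by
  have hq := q.isLt
  simp only [spliceU]
  split_ifs <;> first | rfl | omega | (congr 1; exact Fin.ext (by simp; omega)) | simp_all | (exfalso; omega)

end AUX2
section AUX3
variable {g : ℕ}

lemma two_zsmul_zero' {M : Type*} [AddCommGroup M] [Module (ZMod 2) M] (x : M) :
    (2 : ℤ) • x = 0 := by
  rw [two_zsmul]; exact m2_add_self x

/-- canonical 3-tuple -/
def t3 (g : ℕ) (a b c : UCell g) : Fin 3 → UCell g := fun q =>
  if (q : ℕ) = 0 then a else if (q : ℕ) = 1 then b else c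

lemma splice3_0 (x y : Fin 2 → UCell g) : spliceU 3 0 x y = t3 g (y 0) (y 1) (x 1) := by
  funext q; fin_cases q <;> rfl

lemma splice3_1 (x y : Fin 2 → UCell g) : spliceU 3 1 x y = t3 g (x 0) (y 0) (y 1) := by
  funext q; fin_cases q <;> rfl

lemma oppU_single02 (g m j : ℕ) (D : UCell g → TU g j) (x : Fin 2 → UCell g) :
    oppU g 2 m j 0 D (Finsupp.single x 1) = Finsupp.mapDomain (spliceU m 0 x) (D (x 0)) := by
  rw [oppU_single, dif_pos (by norm_num)]; rfl

lemma oppU_single12 (g m j : ℕ) (D : UCell g → TU g j) (x : Fin 2 → UCell g) :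
    oppU g 2 m j 1 D (Finsupp.single x 1) = Finsupp.mapDomain (spliceU m 1 x) (D (x 1)) := by
  rw [oppU_single, dif_pos (by norm_num)]; rfl

lemma key3 (g : ℕ) (c : UCell g) :
    ∑ j ∈ Finset.range 2, oppU g 2 3 2 j (DeltaUB g 2) (DeltaUB g 2 c) = 0 := by
  cases c <;>
  · simp only [DeltaUB, if_pos rfl, Finset.sum_range_succ, Finset.sum_range_zero, zero_add,
      map_add, map_sum, oppU_single02, oppU_single12, Fin.isValue, Fin.val_zero, Fin.val_one,
      if_true, if_pos rfl, if_neg (by norm_num : (1:ℕ) ≠ 0),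
      Finsupp.mapDomain_add, Finsupp.mapDomain_single, Finsupp.mapDomain_finset_sum,
      splice3_0, splice3_1]
    abel_nf
    simp only [two_zsmul_zero', zero_add, add_zero, ← Finset.sum_add_distrib]
    try rfl
    try { refine Finset.sum_eq_zero fun x _ => ?_; abel_nf; simp only [two_zsmul_zero', zero_add, add_zero] }

end AUX3
section AUX4
variable {g : ℕ}

def E1U (g n : ℕ) (f : Fin n → Fin (2 * ((g + 1) / 2))) : Fin n → UCell g := fun q =>
  UCell.e ⟨2 * (((f q : ℕ) + 2) / 2) - 2, by have := (f q).isLt; omega⟩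

def E2U (g n : ℕ) (f : Fin n → Fin (2 * (g / 2))) : Fin n → UCell g := fun q =>
  UCell.e ⟨2 * (((f q : ℕ) + 2) / 2) - 1, by have := (f q).isLt; omega⟩

lemma DeltaUB_X_ne (g n : ℕ) (h : n ≠ 2) :
    DeltaUB g n UCell.X =
      (∑ f : Fin n → Fin (2 * ((g + 1) / 2)),
        if ∀ a b : Fin n, a < b → f a < f b then Finsupp.single (E1U g n f) 1 else 0) +
      (∑ f : Fin n → Fin (2 * (g / 2)),
        if ∀ a b : Fin n, a < b → f a < f b then Finsupp.single (E2U g n f) 1 else 0) := by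
  simp only [DeltaUB]
  rw [if_neg h]
  unfold E1U E2U
  rfl

lemma DeltaUB_two_v (g : ℕ) :
    DeltaUB g 2 UCell.v = Finsupp.single (fun _ : Fin 2 => UCell.v) 1 := by
  simp [DeltaUB]

lemma DeltaUB_two_e (g : ℕ) (i : Fin g) :
    DeltaUB g 2 (UCell.e i) =
      Finsupp.single (fun p : Fin 2 => if (p : ℕ) = 0 then UCell.v else UCell.e i) 1 +
        Finsupp.single (fun p : Fin 2 => if (p : ℕ) = 0 then UCell.e i else UCell.v) 1 := by
  simp [DeltaUB]

lemma DeltaUB_two_X (g : ℕ) :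
    DeltaUB g 2 UCell.X =
      Finsupp.single (fun p : Fin 2 => if (p : ℕ) = 0 then UCell.v else UCell.X) 1 +
        Finsupp.single (fun p : Fin 2 => if (p : ℕ) = 0 then UCell.X else UCell.v) 1 +
        ∑ i : Fin g, Finsupp.single (fun _ : Fin 2 => UCell.e i) 1 := by
  simp [DeltaUB]

lemma DeltaUB_two_E1U (g n : ℕ) (f : Fin n → Fin (2 * ((g + 1) / 2))) (q : Fin n) :
    DeltaUB g 2 (E1U g n f q) =
      Finsupp.single (fun p : Fin 2 => if (p : ℕ) = 0 then UCell.v else E1U g n f q) 1 +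
        Finsupp.single (fun p : Fin 2 => if (p : ℕ) = 0 then E1U g n f q else UCell.v) 1 := by
  unfold E1U; simp [DeltaUB]

lemma DeltaUB_two_E2U (g n : ℕ) (f : Fin n → Fin (2 * (g / 2))) (q : Fin n) :
    DeltaUB g 2 (E2U g n f q) =
      Finsupp.single (fun p : Fin 2 => if (p : ℕ) = 0 then UCell.v else E2U g n f q) 1 +
        Finsupp.single (fun p : Fin 2 => if (p : ℕ) = 0 then E2U g n f q else UCell.v) 1 := by
  unfold E2U; simp [DeltaUB]

lemma DeltaUB_E1U_ne (g n n' : ℕ) (h : n' ≠ 2) (f : Fin n → Fin (2 * ((g + 1) / 2)))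
    (q : Fin n) : DeltaUB g n' (E1U g n f q) = 0 := by
  unfold E1U; exact DeltaUB_e_ne g n' _ h

lemma DeltaUB_E2U_ne (g n n' : ℕ) (h : n' ≠ 2) (f : Fin n → Fin (2 * (g / 2)))
    (q : Fin n) : DeltaUB g n' (E2U g n f q) = 0 := by
  unfold E2U; exact DeltaUB_e_ne g n' _ h

lemma splice_tel (m n j : ℕ) (hm : m = n + 1) (hj : j + 1 < n) (x : Fin n → UCell g) :
    spliceU m j x (fun p : Fin 2 => if (p : ℕ) = 0 then x ⟨j, by omega⟩ else UCell.v) =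
      spliceU m (j + 1) x
        (fun p : Fin 2 => if (p : ℕ) = 0 then UCell.v else x ⟨j + 1, hj⟩) := by
  funext q
  rw [spliceU_pair m n j hm (by omega), spliceU_pair m n (j + 1) hm (by omega)]
  have hq := q.isLt
  split_ifs <;>
    first
      | rfl
      | omega
      | (congr 1; exact Fin.ext (by simp; omega))
      | simp_all

lemma splice_bl (m n : ℕ) (hm : m = n + 1) (hn : 1 ≤ n) (x : Fin n → UCell g) :
    spliceU m 0 x (fun p : Fin 2 => if (p : ℕ) = 0 then UCell.v else x ⟨0, by omega⟩) =
      spliceU m 1 (fun p : Fin 2 => if (p : ℕ) = 0 then UCell.v else UCell.X) x := by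
  funext q
  rw [spliceU_pair m n 0 hm hn, spliceU_left m n hm hn]
  have hq := q.isLt
  split_ifs <;>
    first
      | rfl
      | omega
      | (congr 1; exact Fin.ext (by simp; omega))
      | simp_all

lemma splice_br (m n : ℕ) (hm : m = n + 1) (hn : 1 ≤ n) (x : Fin n → UCell g) :
    spliceU m (n - 1) x
        (fun p : Fin 2 => if (p : ℕ) = 0 then x ⟨n - 1, by omega⟩ else UCell.v) =
      spliceU m 0 (fun p : Fin 2 => if (p : ℕ) = 0 then UCell.X else UCell.v) x := by
  funext q
  rw [spliceU_pair m n (n - 1) hm (by omega), spliceU_right m n hm hn]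
  have hq := q.isLt
  split_ifs <;>
    first
      | rfl
      | omega
      | (congr 1; exact Fin.ext (by simp; omega))
      | simp_all

end AUX4
section AUX5
variable {g : ℕ}

lemma ite_add_zero' {M : Type*} [AddZeroClass M] (P : Prop) [Decidable P] (x y : M) :
    (if P then x + y else 0) = (if P then x else 0) + (if P then y else 0) := by
  split_ifs <;> simp

noncomputable def AvU (g n : ℕ) (t : Fin n → UCell g) (j : ℕ) : TU g (n + 1) :=
  if h : j < n then
    Finsupp.single (spliceU (n + 1) j t
      (fun p : Fin 2 => if (p : ℕ) = 0 then UCell.v else t ⟨j, h⟩)) 1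
  else 0

noncomputable def BvU (g n : ℕ) (t : Fin n → UCell g) (j : ℕ) : TU g (n + 1) :=
  if h : j < n then
    Finsupp.single (spliceU (n + 1) j t
      (fun p : Fin 2 => if (p : ℕ) = 0 then t ⟨j, h⟩ else UCell.v)) 1
  else 0

lemma AvU_pos (g n : ℕ) (t : Fin n → UCell g) {j : ℕ} (h : j < n) :
    AvU g n t j = Finsupp.single (spliceU (n + 1) j t
      (fun p : Fin 2 => if (p : ℕ) = 0 then UCell.v else t ⟨j, h⟩)) 1 := dif_pos h

lemma BvU_pos (g n : ℕ) (t : Fin n → UCell g) {j : ℕ} (h : j < n) :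
    BvU g n t j = Finsupp.single (spliceU (n + 1) j t
      (fun p : Fin 2 => if (p : ℕ) = 0 then t ⟨j, h⟩ else UCell.v)) 1 := dif_pos h

lemma G1_inner (g n : ℕ) (hn : 3 ≤ n) (t : Fin n → UCell g)
    (ht : ∀ q : Fin n, DeltaUB g 2 (t q) =
      Finsupp.single (fun p : Fin 2 => if (p : ℕ) = 0 then UCell.v else t q) 1 +
        Finsupp.single (fun p : Fin 2 => if (p : ℕ) = 0 then t q else UCell.v) 1) :
    ∑ j ∈ Finset.range n, oppU g n (n + 1) 2 j (DeltaUB g 2) (Finsupp.single t 1) =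
      Finsupp.single (spliceU (n + 1) 1
          (fun p : Fin 2 => if (p : ℕ) = 0 then UCell.v else UCell.X) t) 1 +
        Finsupp.single (spliceU (n + 1) 0
          (fun p : Fin 2 => if (p : ℕ) = 0 then UCell.X else UCell.v) t) 1 := by
  calc
    ∑ j ∈ Finset.range n, oppU g n (n + 1) 2 j (DeltaUB g 2) (Finsupp.single t 1)
        = ∑ j ∈ Finset.range n, (AvU g n t j + BvU g n t j) := by
          refine Finset.sum_congr rfl fun j hj => ?_
          have hj' : j < n := Finset.mem_range.mp hj
          rw [oppU_single, dif_pos hj', ht ⟨j, hj'⟩, Finsupp.mapDomain_add,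
            Finsupp.mapDomain_single, Finsupp.mapDomain_single,
            AvU_pos g n t hj', BvU_pos g n t hj']
    _ = AvU g n t 0 + BvU g n t (n - 1) := by
          refine telescope2 _ _ n (by omega) fun j hj => ?_
          rw [BvU_pos g n t (by omega : j < n), AvU_pos g n t (by omega : j + 1 < n)]
          exact congrArg (fun z => Finsupp.single z (1 : ZMod 2))
            (splice_tel (n + 1) n j rfl (by omega) t)
    _ = _ := by
          rw [AvU_pos g n t (by omega : 0 < n), BvU_pos g n t (by omega : n - 1 < n)]
          rw [splice_bl (n + 1) n rfl (by omega) t, splice_br (n + 1) n rfl (by omega) t]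

lemma G1_half (g n : ℕ) (hn : 3 ≤ n) {N : ℕ}
    (P : (Fin n → Fin N) → Prop) [DecidablePred P]
    (E : (Fin n → Fin N) → Fin n → UCell g)
    (hE : ∀ (f : Fin n → Fin N) (q : Fin n),
      DeltaUB g 2 (E f q) =
        Finsupp.single (fun p : Fin 2 => if (p : ℕ) = 0 then UCell.v else E f q) 1 +
          Finsupp.single (fun p : Fin 2 => if (p : ℕ) = 0 then E f q else UCell.v) 1) :
    ∑ j ∈ Finset.range n, oppU g n (n + 1) 2 j (DeltaUB g 2)
        (∑ f : Fin n → Fin N, if P f then Finsupp.single (E f) 1 else 0) =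
      ∑ f : Fin n → Fin N,
        if P f then
          Finsupp.single (spliceU (n + 1) 1
              (fun p : Fin 2 => if (p : ℕ) = 0 then UCell.v else UCell.X) (E f)) 1 +
            Finsupp.single (spliceU (n + 1) 0
              (fun p : Fin 2 => if (p : ℕ) = 0 then UCell.X else UCell.v) (E f)) 1
        else 0 := by
  calc
    _ = ∑ j ∈ Finset.range n, ∑ f : Fin n → Fin N,
          (if P f then oppU g n (n + 1) 2 j (DeltaUB g 2) (Finsupp.single (E f) 1) else 0) := by
        refine Finset.sum_congr rfl fun j _ => ?_
        rw [map_sum]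
        exact Finset.sum_congr rfl fun f _ => by
          rw [apply_ite (oppU g n (n + 1) 2 j (DeltaUB g 2)), map_zero]
    _ = ∑ f : Fin n → Fin N, ∑ j ∈ Finset.range n,
          (if P f then oppU g n (n + 1) 2 j (DeltaUB g 2) (Finsupp.single (E f) 1) else 0) :=
        Finset.sum_comm
    _ = _ := by
        refine Finset.sum_congr rfl fun f _ => ?_
        split_ifs with hP
        · exact G1_inner g n hn (E f) (hE f)
        · simp

lemma oppU_DeltaX (g n m r a : ℕ) (hn : n ≠ 2) (ha : a < n) (D : UCell g → TU g r) :
    oppU g n m r a D (DeltaUB g n UCell.X) =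
      (∑ f : Fin n → Fin (2 * ((g + 1) / 2)),
        if ∀ p q : Fin n, p < q → f p < f q then
          Finsupp.mapDomain (spliceU m a (E1U g n f)) (D (E1U g n f ⟨a, ha⟩)) else 0) +
      (∑ f : Fin n → Fin (2 * (g / 2)),
        if ∀ p q : Fin n, p < q → f p < f q then
          Finsupp.mapDomain (spliceU m a (E2U g n f)) (D (E2U g n f ⟨a, ha⟩)) else 0) := by
  rw [DeltaUB_X_ne g n hn, map_add, map_sum, map_sum]
  congr 1 <;>
    · refine Finset.sum_congr rfl fun f _ => ?_
      rw [apply_ite (oppU g n m r a D), map_zero, oppU_single, dif_pos ha]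

lemma G2_eq (g n : ℕ) (hn : 3 ≤ n) :
    ∑ j ∈ Finset.range 2, oppU g 2 (n + 1) n j (DeltaUB g n) (DeltaUB g 2 UCell.X) =
      Finsupp.mapDomain (spliceU (n + 1) 1
          (fun p : Fin 2 => if (p : ℕ) = 0 then UCell.v else UCell.X)) (DeltaUB g n UCell.X) +
        Finsupp.mapDomain (spliceU (n + 1) 0
          (fun p : Fin 2 => if (p : ℕ) = 0 then UCell.X else UCell.v)) (DeltaUB g n UCell.X) := by
  have hv : DeltaUB g n UCell.v = 0 := DeltaUB_v_ne g n (by omega)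
  have he : ∀ i : Fin g, DeltaUB g n (UCell.e i) = 0 := fun i => DeltaUB_e_ne g n i (by omega)
  rw [DeltaUB_two_X]
  simp only [Finset.sum_range_succ, Finset.sum_range_zero, zero_add, map_add, map_sum,
    oppU_single02, oppU_single12]
  simp only [Fin.isValue, Fin.val_zero, Fin.val_one, if_true, if_pos rfl,
    if_neg (by norm_num : (1 : ℕ) ≠ 0)]
  simp [hv, he]
  abel

lemma G1_total (g n : ℕ) (hn : 3 ≤ n) :
    ∑ j ∈ Finset.range n, oppU g n (n + 1) 2 j (DeltaUB g 2) (DeltaUB g n UCell.X) =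
      Finsupp.mapDomain (spliceU (n + 1) 1
          (fun p : Fin 2 => if (p : ℕ) = 0 then UCell.v else UCell.X)) (DeltaUB g n UCell.X) +
        Finsupp.mapDomain (spliceU (n + 1) 0
          (fun p : Fin 2 => if (p : ℕ) = 0 then UCell.X else UCell.v)) (DeltaUB g n UCell.X) := by
  rw [DeltaUB_X_ne g n (by omega)]
  simp only [map_add, Finset.sum_add_distrib]
  rw [G1_half g n hn _ (E1U g n) (DeltaUB_two_E1U g n),
    G1_half g n hn _ (E2U g n) (DeltaUB_two_E2U g n)]
  simp only [Finsupp.mapDomain_add, Finsupp.mapDomain_finset_sum, apply_ite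
    (Finsupp.mapDomain (spliceU (n + 1) 1
      (fun p : Fin 2 => if (p : ℕ) = 0 then UCell.v else UCell.X))), apply_ite
    (Finsupp.mapDomain (spliceU (n + 1) 0
      (fun p : Fin 2 => if (p : ℕ) = 0 then UCell.X else UCell.v))),
    Finsupp.mapDomain_single, Finsupp.mapDomain_zero]
  simp only [ite_add_zero']
  rw [Finset.sum_add_distrib, Finset.sum_add_distrib]
  abel

end AUX5
section AUX6

lemma keyX4 (g k : ℕ) (hk : 4 ≤ k) :
    ∑ i ∈ Finset.Icc 1 (k - 2), ∑ j ∈ Finset.range (k - i),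
      oppU g (k - i) k (i + 1) j (DeltaUB g (i + 1)) (DeltaUB g (k - i) UCell.X) = 0 := by
  obtain ⟨n, rfl⟩ : ∃ n, k = n + 1 := ⟨k - 1, by omega⟩
  have hn : 3 ≤ n := by omega
  have hIcc : Finset.Icc 1 (n + 1 - 2) = insert 1 (insert (n - 1) (Finset.Icc 2 (n - 2))) := by
    ext a; simp only [Finset.mem_Icc, Finset.mem_insert]; omega
  rw [hIcc, Finset.sum_insert (by simp only [Finset.mem_insert, Finset.mem_Icc]; omega),
    Finset.sum_insert (by simp only [Finset.mem_Icc]; omega)]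
  have hmid : ∑ i ∈ Finset.Icc 2 (n - 2), ∑ j ∈ Finset.range (n + 1 - i),
      oppU g (n + 1 - i) (n + 1) (i + 1) j (DeltaUB g (i + 1))
        (DeltaUB g (n + 1 - i) UCell.X) = 0 := by
    refine Finset.sum_eq_zero fun i hi => Finset.sum_eq_zero fun j hj => ?_
    rw [Finset.mem_Icc] at hi
    rw [Finset.mem_range] at hj
    rw [oppU_DeltaX g (n + 1 - i) (n + 1) (i + 1) j (by omega) hj]
    simp [DeltaUB_E1U_ne g (n + 1 - i) (i + 1) (by omega : i + 1 ≠ 2),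
      DeltaUB_E2U_ne g (n + 1 - i) (i + 1) (by omega : i + 1 ≠ 2)]
  rw [hmid, add_zero]
  rw [show n + 1 - 1 = n from rfl, show (1 : ℕ) + 1 = 2 from rfl,
    show n + 1 - (n - 1) = 2 from by omega, show n - 1 + 1 = n from by omega,
    G1_total g n hn, G2_eq g n hn]
  exact m2_add_self _

lemma key (g k : ℕ) (hk : 2 ≤ k) (c : UCell g) :
    ∑ i ∈ Finset.Icc 1 (k - 2), ∑ j ∈ Finset.range (k - i),
      oppU g (k - i) k (i + 1) j (DeltaUB g (i + 1)) (DeltaUB g (k - i) c) = 0 := by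
  rcases eq_or_ne k 2 with rfl | hk2
  · simp
  rcases eq_or_ne k 3 with rfl | hk3
  · simp only [show (3 : ℕ) - 2 = 1 from rfl, Finset.Icc_self, Finset.sum_singleton,
      show (3 : ℕ) - 1 = 2 from rfl, show (1 : ℕ) + 1 = 2 from rfl]
    exact key3 g c
  have hk4 : 4 ≤ k := by omega
  cases c with
  | v =>
    refine Finset.sum_eq_zero fun i hi => ?_
    rw [Finset.mem_Icc] at hi
    by_cases h2 : k - i = 2
    · rw [h2]
      refine Finset.sum_eq_zero fun j hj => ?_
      rw [Finset.mem_range] at hj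
      interval_cases j
      · rw [DeltaUB_two_v, oppU_single02]
        simp [DeltaUB_v_ne g (i + 1) (by omega : i + 1 ≠ 2)]
      · rw [DeltaUB_two_v, oppU_single12]
        simp [DeltaUB_v_ne g (i + 1) (by omega : i + 1 ≠ 2)]
    · rw [DeltaUB_v_ne g (k - i) h2]
      simp
  | e i0 =>
    refine Finset.sum_eq_zero fun i hi => ?_
    rw [Finset.mem_Icc] at hi
    by_cases h2 : k - i = 2
    · rw [h2]
      refine Finset.sum_eq_zero fun j hj => ?_
      rw [Finset.mem_range] at hj
      have hv : DeltaUB g (i + 1) UCell.v = 0 := DeltaUB_v_ne g (i + 1) (by omega)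
      have he : DeltaUB g (i + 1) (UCell.e i0) = 0 := DeltaUB_e_ne g (i + 1) i0 (by omega)
      interval_cases j
      · rw [DeltaUB_two_e, map_add, oppU_single02, oppU_single02]
        simp [hv, he]
      · rw [DeltaUB_two_e, map_add, oppU_single12, oppU_single12]
        simp [hv, he]
    · rw [DeltaUB_e_ne g (k - i) i0 h2]
      simp
  | X => exact keyX4 g k hk4

end AUX6

/-- For every `k ≥ 2` the operations `Δ₂, Δ₃, …` on the mod-2
chains/homology of the closed compact unorientable surface of genus `g` (with zero
differential) satisfy the `A_∞`-coalgebra relation in arity `k`: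
`Σ_{i=1}^{k−2} Σ_{j=0}^{k−i−1} (1^{⊗j} ⊗ Δ_{i+1} ⊗ 1^{⊗(k−i−j−1)}) ∘ Δ_{k−i} = 0`;
thus `(M, 0, Δ₂, Δ₃, …)` is an `A_∞`-coalgebra over `ℤ/2ℤ`. -/
theorem unorientable_surface_Ainfinity_coalgebra (g : ℕ) (hg : 1 ≤ g) :
    ∀ k : ℕ, 2 ≤ k →
      ∑ i ∈ Finset.Icc 1 (k - 2), ∑ j ∈ Finset.range (k - i),
        (oppU g (k - i) k (i + 1) j (DeltaUB g (i + 1))) ∘ₗ (DmapU g (k - i)) = 0 := by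
  intro k hk
  refine Finsupp.lhom_ext fun x b => ?_
  have hb : (Finsupp.single x b : TU g 1) = b • Finsupp.single x 1 := by
    rw [Finsupp.smul_single, smul_eq_mul, mul_one]
  simp only [LinearMap.zero_apply]
  rw [hb, map_smul]
  simp only [LinearMap.sum_apply, LinearMap.comp_apply, DmapU_single]
  rw [key g k hk (x 0), smul_zero]
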